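/- arXiv:1006.2758 — 4 statements merged into one kernel-verified Lean document; each statement's English description precedes it below -/
import Mathlib

section
/- As ρ → ∞, the gap between the benchmark rate and the equal-power ZFDPC-SUS sum rate satisfies C(ρ) − R_DPC(ρ) = (1/(ρ ln 2)) · Σ_{i=1}^{M} κ_i/(λ_i |l_{i,i}|²) + O(ρ^{-2}); that is, the function ρ ↦ ρ² · ( C(ρ) − R_DPC(ρ) − (1/(ρ ln 2)) Σ_{i=1}^{M} κ_i/(λ_i |l_{i,i}|²) ) is bounded as ρ → ∞. -/
/-!
Since `Q Qᴴ = 1`, the benchmark rate is `log₂ det(1 + ρ H)` with `H = G Gᴴ`, `G = Λ^{1/2} L`, and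
the ZFDPC rate is `log₂ det(1 + ρ D)` for the diagonal channel `D = diag(λ_i |l_{i,i}|²)`; both
matrices have determinant `∏ λ_i |l_{i,i}|²`. Writing `det(1 + ρ H) = ρ^M det H · det(1 + ρ⁻¹ H⁻¹)`
and using `log det(1 + x A) = x tr A + O(x²)` as `x → 0`, the gap in nats is
`ρ⁻¹ (tr H⁻¹ - tr D⁻¹) + O(ρ⁻²)`. Finally `H⁻¹ = (G⁻¹)ᴴ G⁻¹` with `G⁻¹ = L⁻¹ Λ^{-1/2}`, and the
`i`-th column of the lower triangular `L⁻¹` has diagonal entry `1 / l_{i,i}`, hence squared norm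
`(1 + κ_i) / |l_{i,i}|²`; so `tr H⁻¹ - tr D⁻¹ = Σ κ_i / (λ_i |l_{i,i}|²)`.
-/

open Matrix Filter Finset MeasureTheory

/-- The benchmark rate `C(ρ) = log₂ det(I + ρ C Cᴴ)` with `C = Λ^{1/2} L Q`. -/
noncomputable def benchRate (M m : ℕ) (lam : Fin M → ℝ)
    (L : Matrix (Fin M) (Fin M) ℂ) (Q : Matrix (Fin M) (Fin m) ℂ) (ρ : ℝ) : ℝ :=
  Real.logb 2
    (((1 : Matrix (Fin M) (Fin M) ℂ) +
      (ρ : ℂ) • ((Matrix.diagonal (fun i => (Real.sqrt (lam i) : ℂ)) * L * Q) *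
        (Matrix.diagonal (fun i => (Real.sqrt (lam i) : ℂ)) * L * Q)ᴴ)).det).re

/-- The equal-power ZFDPC-SUS sum rate `R_DPC(ρ) = Σ_i log₂(1 + ρ λ_i |l_{i,i}|²)`. -/
noncomputable def rateDPC (M : ℕ) (lam : Fin M → ℝ)
    (L : Matrix (Fin M) (Fin M) ℂ) (ρ : ℝ) : ℝ :=
  ∑ i, Real.logb 2 (1 + ρ * lam i * Complex.normSq (L i i))

/-- `κ_i = Σ_{j>i} |t_{j,i}|²/|t_{i,i}|²` where `T = L⁻¹`. -/
noncomputable def kappa (M : ℕ) (L : Matrix (Fin M) (Fin M) ℂ) (i : Fin M) : ℝ :=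
  ∑ j ∈ Finset.univ.filter (fun j => i < j),
    Complex.normSq (L⁻¹ j i) / Complex.normSq (L⁻¹ i i)

open Asymptotics Topology

theorem Real.isBigO_log_one_add_sub_self :
    (fun y : ℝ => Real.log (1 + y) - y) =O[𝓝 0] fun y => y ^ 2 := by
  have hc := Complex.log_sub_self_isBigO.comp_tendsto
    (Complex.continuous_ofReal.tendsto' (0 : ℝ) 0 Complex.ofReal_zero)
  refine (hc.norm_norm.congr' ?_ (Eventually.of_forall fun y => ?_)).of_norm_norm
  · filter_upwards [eventually_gt_nhds (show (-1 : ℝ) < 0 by norm_num)] with y hy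
    have : ((Real.log (1 + y) : ℝ) : ℂ) = Complex.log (1 + y) := by
      rw [Complex.ofReal_log (by linarith)]; push_cast; rfl
    simp only [Function.comp_apply, ← this, ← Complex.ofReal_sub, Complex.norm_real]
  · simp [Function.comp_apply]

theorem Real.isBigO_log_sub_mul {f : ℝ → ℝ} {c : ℝ}
    (hf : (fun x => f x - (1 + c * x)) =O[𝓝 0] fun x => x ^ 2) :
    (fun x => Real.log (f x) - c * x) =O[𝓝 0] fun x => x ^ 2 := by
  have hsq : (fun x : ℝ => x ^ 2) =O[𝓝 0] fun x => x :=
    (isLittleO_pow_id one_lt_two).isBigO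
  have hlin : (fun x => f x - 1 - c * x) =O[𝓝 0] fun x => x ^ 2 := by
    simpa only [sub_sub] using hf
  have hu : (fun x => f x - 1) =O[𝓝 0] fun x => x := by
    simpa using (hlin.trans hsq).add ((isBigO_refl _ _).const_mul_left c)
  have hu0 : Tendsto (fun x => f x - 1) (𝓝 0) (𝓝 0) :=
    hu.trans_tendsto (continuous_id.tendsto' 0 0 rfl)
  have hlog := (Real.isBigO_log_one_add_sub_self.comp_tendsto hu0).trans (hu.pow 2)
  simpa using hlog.add hlin

namespace Matrix

theorem re_trace_conjTranspose_mul_self {m n : Type*} [Fintype m] [Fintype n]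
    (B : Matrix m n ℂ) : (trace (Bᴴ * B)).re = ∑ i, ∑ j, Complex.normSq (B j i) := by
  simp [trace, mul_apply, Complex.normSq_apply]

variable {ι : Type*} [Fintype ι] [DecidableEq ι]

theorem isBigO_det_one_add_smul_sub {𝕜 : Type*} [NormedField 𝕜] (A : Matrix ι ι 𝕜) :
    (fun x : 𝕜 => det (1 + x • A) - (1 + trace A * x)) =O[𝓝 0] fun x => x ^ 2 := by
  set p := (det (1 + (Polynomial.X : Polynomial 𝕜) • A.map Polynomial.C)).divX.divX
  have hp : ∀ x : 𝕜, det (1 + x • A) - (1 + trace A * x) = p.eval x * x ^ 2 := fun x => by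
    rw [det_one_add_smul]; ring
  simp only [hp]
  simpa using (((Polynomial.continuous p).tendsto 0).isBigO_one 𝕜).mul
    (isBigO_refl (fun x : 𝕜 => x ^ 2) _)

theorem isBigO_log_re_det_one_add_smul (A : Matrix ι ι ℂ) :
    (fun x : ℝ => Real.log (det (1 + (x : ℂ) • A)).re - (trace A).re * x) =O[𝓝 0]
      fun x => x ^ 2 := by
  refine Real.isBigO_log_sub_mul ?_
  have hc := (isBigO_det_one_add_smul_sub A).comp_tendsto
    (Complex.continuous_ofReal.tendsto' (0 : ℝ) 0 Complex.ofReal_zero)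
  refine (isBigO_of_le _ fun x => ?_).trans (hc.trans (isBigO_of_le _ fun x => ?_))
  · simpa using Complex.abs_re_le_norm (det (1 + (x : ℂ) • A) - (1 + trace A * x))
  · simp

theorem det_one_add_smul_eq_mul_det_one_add_inv_smul {K : Type*} [Field K] {H : Matrix ι ι K}
    (hH : IsUnit H.det) {r : K} (hr : r ≠ 0) :
    det (1 + r • H) = r ^ Fintype.card ι * det H * det (1 + r⁻¹ • H⁻¹) := by
  have : 1 + r • H = (r • H) * (1 + r⁻¹ • H⁻¹) := by
    rw [Matrix.mul_add, Matrix.mul_one, smul_mul_smul_comm, mul_inv_cancel₀ hr,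
      mul_nonsing_inv H hH, one_smul, add_comm]
  rw [this, det_mul, det_smul]

theorem isBigO_log_re_det_one_add_smul_atTop {H : Matrix ι ι ℂ} {c : ℝ} (hc : c ≠ 0)
    (hH : H.det = c) :
    (fun ρ : ℝ => Real.log (det (1 + (ρ : ℂ) • H)).re -
      (Fintype.card ι * Real.log ρ + Real.log c + (trace H⁻¹).re * ρ⁻¹)) =O[atTop]
      fun ρ => ρ⁻¹ ^ 2 := by
  have hcont : Continuous fun x : ℝ => (det (1 + (x : ℂ) • H⁻¹)).re := by fun_prop
  have hne : ∀ᶠ ρ : ℝ in atTop, (det (1 + ((ρ⁻¹ : ℝ) : ℂ) • H⁻¹)).re ≠ 0 :=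
    tendsto_inv_atTop_zero.eventually ((hcont.tendsto 0).eventually_ne (by simp))
  refine ((isBigO_log_re_det_one_add_smul H⁻¹).comp_tendsto tendsto_inv_atTop_zero).congr'
    ?_ EventuallyEq.rfl
  filter_upwards [hne, eventually_gt_atTop 0] with ρ hne hρ
  rw [Function.comp_apply, det_one_add_smul_eq_mul_det_one_add_inv_smul
      (hH ▸ (Complex.ofReal_ne_zero.2 hc).isUnit) (Complex.ofReal_ne_zero.2 hρ.ne'),
    hH, ← Complex.ofReal_pow, ← Complex.ofReal_mul, ← Complex.ofReal_inv, Complex.re_ofReal_mul,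
    Real.log_mul (by positivity) hne, Real.log_mul (by positivity) hc, Real.log_pow]
  ring

theorem inv_diagonal_of_ne_zero {K : Type*} [Field K] {v : ι → K} (hv : ∀ i, v i ≠ 0) :
    (diagonal v)⁻¹ = diagonal fun i => (v i)⁻¹ := by
  refine inv_eq_left_inv ?_
  simp [diagonal_mul_diagonal, hv]

namespace IsLowerTriangular

variable [LinearOrder ι]

theorem inv {R : Type*} [CommRing R] {L : Matrix ι ι R} (h : L.IsLowerTriangular) :
    L⁻¹.IsLowerTriangular := by
  by_cases hL : IsUnit L.det
  · have := L.invertibleOfIsUnitDet hL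
    exact blockTriangular_inv_of_blockTriangular h
  · rw [nonsing_inv_apply_not_isUnit L hL]
    exact blockTriangular_zero

variable {K : Type*} [Field K] {L : Matrix ι ι K}

theorem isUnit_det (h : L.IsLowerTriangular) (hd : ∀ i, L i i ≠ 0) : IsUnit L.det := by
  rw [det_of_isLowerTriangular L h]
  exact (prod_ne_zero_iff.mpr fun i _ => hd i).isUnit

theorem inv_apply_self (h : L.IsLowerTriangular) (hL : IsUnit L.det) (i : ι) :
    L⁻¹ i i = (L i i)⁻¹ := by
  have hii : (L * L⁻¹) i i = L i i * L⁻¹ i i := by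
    rw [mul_apply]
    refine sum_eq_single_of_mem i (mem_univ i) fun k _ hk => ?_
    rcases lt_or_gt_of_ne hk with hk | hk
    · rw [h.inv hk, mul_zero]
    · rw [h hk, zero_mul]
  rw [mul_nonsing_inv L hL, one_apply_eq] at hii
  exact eq_inv_of_mul_eq_one_right hii.symm

end IsLowerTriangular

end Matrix

section ZFDPC

variable {M : ℕ} {lam : Fin M → ℝ} {L : Matrix (Fin M) (Fin M) ℂ}

theorem sum_normSq_inv_apply_eq_one_add_kappa (h : L.IsLowerTriangular) (hd : ∀ i, L i i ≠ 0)
    (j : Fin M) :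
    ∑ i, Complex.normSq (L⁻¹ i j) = (1 + kappa M L j) / Complex.normSq (L j j) := by
  have hdiag : ∑ i ∈ univ.filter (fun i => ¬ j < i), Complex.normSq (L⁻¹ i j) =
      Complex.normSq (L⁻¹ j j) := by
    refine sum_eq_single_of_mem j (by simp) fun k hk hkj => ?_
    have hkj : k < j := lt_of_le_of_ne (not_lt.mp (mem_filter.mp hk).2) hkj
    rw [h.inv hkj, map_zero]
  have hjj := Complex.normSq_pos.mpr (hd j)
  rw [← sum_filter_add_sum_filter_not univ (fun i => j < i), hdiag, kappa, ← sum_div,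
    h.inv_apply_self (h.isUnit_det hd), map_inv₀]
  field_simp
  ring

theorem re_trace_inv_diagonal_sqrt_mul_mul_conjTranspose (hlam : ∀ i, 0 < lam i)
    (h : L.IsLowerTriangular) (hd : ∀ i, L i i ≠ 0) {G : Matrix (Fin M) (Fin M) ℂ}
    (hG : G = diagonal (fun i => (√(lam i) : ℂ)) * L) :
    (trace (G * Gᴴ)⁻¹).re = ∑ i, (1 + kappa M L i) / (lam i * Complex.normSq (L i i)) := by
  have hGinv : G⁻¹ = L⁻¹ * diagonal (fun i => ((√(lam i))⁻¹ : ℂ)) := by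
    rw [hG, Matrix.mul_inv_rev, inv_diagonal_of_ne_zero fun i => by
      simpa using (Real.sqrt_pos.mpr (hlam i)).ne']
  rw [Matrix.mul_inv_rev, ← conjTranspose_nonsing_inv, re_trace_conjTranspose_mul_self, hGinv]
  refine sum_congr rfl fun i _ => ?_
  simp only [mul_diagonal, Complex.normSq_mul, map_inv₀, Complex.normSq_ofReal,
    Real.mul_self_sqrt (hlam i).le, ← sum_mul, sum_normSq_inv_apply_eq_one_add_kappa h hd]
  field_simp

theorem det_diagonal_sqrt_mul_mul_conjTranspose (hlam : ∀ i, 0 ≤ lam i) (h : L.IsLowerTriangular)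
    {G : Matrix (Fin M) (Fin M) ℂ} (hG : G = diagonal (fun i => (√(lam i) : ℂ)) * L) :
    det (G * Gᴴ) = ((∏ i, lam i * Complex.normSq (L i i) : ℝ) : ℂ) := by
  rw [det_mul, det_conjTranspose, Complex.star_def, Complex.mul_conj, hG, det_mul, det_diagonal,
    det_of_isLowerTriangular L h, ← prod_mul_distrib, map_prod]
  simp [Complex.normSq_mul, Real.mul_self_sqrt (hlam _)]

theorem rateDPC_eq_logb_det (hlam : ∀ i, 0 ≤ lam i) {ρ : ℝ} (hρ : 0 ≤ ρ) :
    rateDPC M lam L ρ = Real.logb 2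
      (det (1 + (ρ : ℂ) • diagonal fun i => ((lam i * Complex.normSq (L i i) : ℝ) : ℂ))).re := by
  have hdiag : (1 + (ρ : ℂ) • diagonal fun i => ((lam i * Complex.normSq (L i i) : ℝ) : ℂ)) =
      diagonal fun i => ((1 + ρ * lam i * Complex.normSq (L i i) : ℝ) : ℂ) := by
    ext i j
    by_cases hij : i = j <;> simp [hij, one_apply, mul_assoc]
  rw [hdiag, det_diagonal, ← Complex.ofReal_prod, Complex.ofReal_re,
    Real.logb_prod _ _ fun i _ => (add_pos_of_pos_of_nonneg one_pos
      (mul_nonneg (mul_nonneg hρ (hlam i)) (Complex.normSq_nonneg _))).ne', rateDPC]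

theorem benchRate_eq_logb_det {m : ℕ} {Q : Matrix (Fin M) (Fin m) ℂ} (hQ : Q * Qᴴ = 1) (ρ : ℝ)
    {G : Matrix (Fin M) (Fin M) ℂ} (hG : G = diagonal (fun i => (√(lam i) : ℂ)) * L) :
    benchRate M m lam L Q ρ = Real.logb 2 (det (1 + (ρ : ℂ) • (G * Gᴴ))).re := by
  rw [benchRate, ← hG, conjTranspose_mul, Matrix.mul_assoc, ← Matrix.mul_assoc Q, hQ,
    Matrix.one_mul]

end ZFDPC

theorem exists_abs_sq_mul_le_of_isBigO_inv_sq {f : ℝ → ℝ}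
    (hf : f =O[atTop] fun ρ => ρ⁻¹ ^ 2) : ∃ B, ∀ᶠ ρ in atTop, |ρ ^ 2 * f ρ| ≤ B := by
  obtain ⟨B, hB⟩ := hf.bound
  refine ⟨B, ?_⟩
  filter_upwards [hB, eventually_ne_atTop 0] with ρ hB hρ
  rw [abs_mul, abs_pow, ← Real.norm_eq_abs, ← Real.norm_eq_abs]
  calc ‖ρ‖ ^ 2 * ‖f ρ‖ ≤ ‖ρ‖ ^ 2 * (B * ‖ρ⁻¹ ^ 2‖) := by gcongr
    _ = B := by rw [norm_pow, norm_inv]; field_simp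

theorem highSNR_gap_ZFDPC_general
    (M m : ℕ)
    (lam : Fin M → ℝ) (hlam : ∀ i, 0 < lam i)
    (L : Matrix (Fin M) (Fin M) ℂ)
    (hLtri : ∀ i j : Fin M, i < j → L i j = 0)
    (hLdiag : ∀ i : Fin M, L i i ≠ 0)
    (Q : Matrix (Fin M) (Fin m) ℂ) (hQ : Q * Qᴴ = 1) :
    ∃ B : ℝ, ∀ᶠ ρ : ℝ in atTop,
      |ρ ^ 2 * (benchRate M m lam L Q ρ - rateDPC M lam L ρ -
        (1 / (ρ * Real.log 2)) *
          ∑ i, kappa M L i / (lam i * Complex.normSq (L i i)))| ≤ B := by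
  have hL : L.IsLowerTriangular := fun i j h => hLtri i j h
  set d : Fin M → ℝ := fun i => lam i * Complex.normSq (L i i)
  set G := diagonal (fun i => (√(lam i) : ℂ)) * L with hG
  set D := diagonal fun i => (d i : ℂ)
  have hd : ∀ i, 0 < d i := fun i => mul_pos (hlam i) (Complex.normSq_pos.mpr (hLdiag i))
  have hprod : ∏ i, d i ≠ 0 := prod_ne_zero_iff.mpr fun i _ => (hd i).ne'
  have hexp := (isBigO_log_re_det_one_add_smul_atTop hprod
    (det_diagonal_sqrt_mul_mul_conjTranspose (fun i => (hlam i).le) hL hG)).sub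
    (isBigO_log_re_det_one_add_smul_atTop (H := D) hprod (by simp [D, d]))
  have htr : (trace (G * Gᴴ)⁻¹).re - (trace D⁻¹).re = ∑ i, kappa M L i / d i := by
    rw [re_trace_inv_diagonal_sqrt_mul_mul_conjTranspose hlam hL hLdiag hG,
      inv_diagonal_of_ne_zero fun i => Complex.ofReal_ne_zero.2 (hd i).ne', trace_diagonal,
      Complex.re_sum, ← sum_sub_distrib]
    refine sum_congr rfl fun i _ => ?_
    rw [← Complex.ofReal_inv, Complex.ofReal_re, add_div, one_div, add_sub_cancel_left]
  refine exists_abs_sq_mul_le_of_isBigO_inv_sq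
    ((hexp.const_mul_left (Real.log 2)⁻¹).congr' ?_ EventuallyEq.rfl)
  filter_upwards [eventually_gt_atTop 0] with ρ hρ
  rw [benchRate_eq_logb_det hQ ρ hG, rateDPC_eq_logb_det (fun i => (hlam i).le) hρ.le, ← htr, Real.logb, Real.logb]
  field_simp
  ring

/-- High-SNR gap for ZFDPC-SUS:
`C(ρ) − R_DPC(ρ) = (1/(ρ ln 2)) Σ_i κ_i/(λ_i |l_{i,i}|²) + O(ρ⁻²)` as `ρ → ∞`. -/
theorem highSNR_gap_ZFDPC
    (M m : ℕ) (hM : 1 ≤ M) (hm : M ≤ m)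
    (lam : Fin M → ℝ) (hlam : ∀ i, 0 < lam i)
    (L : Matrix (Fin M) (Fin M) ℂ)
    (hLtri : ∀ i j : Fin M, i < j → L i j = 0)
    (hLdiag : ∀ i : Fin M, L i i ≠ 0)
    (Q : Matrix (Fin M) (Fin m) ℂ) (hQ : Q * Qᴴ = 1) :
    ∃ B : ℝ, ∀ᶠ ρ : ℝ in atTop,
      |ρ ^ 2 * (benchRate M m lam L Q ρ - rateDPC M lam L ρ -
        (1 / (ρ * Real.log 2)) *
          ∑ i, kappa M L i / (lam i * Complex.normSq (L i i)))| ≤ B :=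
  highSNR_gap_ZFDPC_general M m lam hlam L hLtri hLdiag Q hQ
end

section
/- As ρ → 0⁺, the gap between the benchmark rate and the equal-power ZFDPC-SUS sum rate satisfies C(ρ) − R_DPC(ρ) = (ρ/ln 2) · Σ_{i=1}^{M} η_i λ_i |l_{i,i}|² + O(ρ²); that is, the function ρ ↦ ρ^{-2} · ( C(ρ) − R_DPC(ρ) − (ρ/ln 2) Σ_{i=1}^{M} η_i λ_i |l_{i,i}|² ) is bounded as ρ → 0⁺. -/
/-!
Because `Q` has orthonormal rows, `C Cᴴ = Λ^{1/2} L Lᴴ Λ^{1/2}`, whose trace is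
`Σ_i λ_i Σ_j |l_{i,j}|² = Σ_i (1 + η_i) λ_i |l_{i,i}|²` since `L` is lower triangular.
The expansions `det (I + ρ A) = 1 + ρ tr A + O(ρ²)` and `log (1 + x) = x + O(x²)` give
`C(ρ) ln 2 = ρ tr (C Cᴴ) + O(ρ²)` and `R_DPC(ρ) ln 2 = ρ Σ_i λ_i |l_{i,i}|² + O(ρ²)`;
the linear terms differ by exactly `ρ Σ_i η_i λ_i |l_{i,i}|²`.
-/

open Matrix Filter Finset MeasureTheory

/-- The equal-power ZFBF-SUS sum rate `R_BF(ρ) = Σ_i log₂(1 + ρ λ_i / ‖t_i‖²)`,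
where `‖t_i‖² = Σ_j |t_{j,i}|²` is the squared norm of the `i`-th column of `T = L⁻¹`. -/
noncomputable def rateBF (M : ℕ) (lam : Fin M → ℝ)
    (L : Matrix (Fin M) (Fin M) ℂ) (ρ : ℝ) : ℝ :=
  ∑ i, Real.logb 2 (1 + ρ * lam i / ∑ j, Complex.normSq (L⁻¹ j i))

/-- `η_i = Σ_{j<i} |l_{i,j}|²/|l_{i,i}|²`. -/
noncomputable def eta (M : ℕ) (L : Matrix (Fin M) (Fin M) ℂ) (i : Fin M) : ℝ :=
  ∑ j ∈ Finset.univ.filter (fun j => j < i),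
    Complex.normSq (L i j) / Complex.normSq (L i i)

open Asymptotics Topology

lemma Real.log_one_add_sub_self_isBigO :
    (fun x : ℝ => Real.log (1 + x) - x) =O[𝓝 0] fun x => x ^ 2 := by
  have hc := Complex.log_sub_self_isBigO.comp_tendsto
    (Complex.continuous_ofReal.tendsto' 0 0 Complex.ofReal_zero)
  have hre : (fun x : ℝ => Real.log (1 + x) - x) =O[𝓝 0]
      fun x : ℝ => Complex.log (1 + x) - x := isBigO_of_le _ fun x => by
    have : Real.log (1 + x) - x = (Complex.log (1 + x) - x).re := by
      simp [← Complex.ofReal_one, ← Complex.ofReal_add, Complex.log_ofReal_re]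
    rw [this]
    exact Complex.abs_re_le_norm _
  exact hre.trans (hc.trans (isBigO_of_le _ fun x => by simp))

lemma log_sub_mul_isBigO_sq {f : ℝ → ℝ} {c : ℝ}
    (hf : (fun x => f x - 1 - c * x) =O[𝓝 0] fun x => x ^ 2) :
    (fun x => Real.log (f x) - c * x) =O[𝓝 0] fun x => x ^ 2 := by
  have hsq : (fun x : ℝ => x ^ 2) =O[𝓝 0] fun x => x := (isLittleO_pow_id one_lt_two).isBigO
  have hf_lin : (fun x => f x - 1) =O[𝓝 0] fun x => x :=
    ((hf.trans hsq).add (isBigO_const_mul_self c _ _)).congr_left fun x => by ring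
  have hf_tendsto : Tendsto (fun x => f x - 1) (𝓝 0) (𝓝 0) := hf_lin.trans_tendsto tendsto_id
  have hlog := Real.log_one_add_sub_self_isBigO.comp_tendsto hf_tendsto
  exact ((hlog.trans (hf_lin.pow 2)).add hf).congr_left fun x => by simp

lemma re_det_one_add_smul_sub_isBigO_sq {n : Type*} [Fintype n] [DecidableEq n]
    (A : Matrix n n ℂ) :
    (fun x : ℝ => (det (1 + (x : ℂ) • A)).re - 1 - (trace A).re * x) =O[𝓝 0]
      fun x => x ^ 2 := by
  set p := (det (1 + (Polynomial.X : Polynomial ℂ) • A.map Polynomial.C)).divX.divX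
  have hp : Continuous fun x : ℝ => (p.eval (x : ℂ)).re :=
    Complex.continuous_re.comp (p.continuous.comp Complex.continuous_ofReal)
  have hbound := ((hp.tendsto 0).isBigO_one ℝ).mul (isBigO_refl (fun x : ℝ => x ^ 2) _)
  refine (hbound.congr_right fun x => one_mul _).congr_left fun x => ?_
  rw [det_one_add_smul, ← Complex.ofReal_pow]
  simp only [Complex.add_re, Complex.one_re, Complex.re_mul_ofReal, p]
  ring

lemma mul_conjTranspose_self_mul_of_mul_conjTranspose_eq_one {α m n k : Type*} [Semiring α]
    [StarRing α] [Fintype n] [Fintype k] [DecidableEq n] (B : Matrix m n α)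
    {Q : Matrix n k α} (hQ : Q * Qᴴ = 1) : B * Q * (B * Q)ᴴ = B * Bᴴ := by
  rw [conjTranspose_mul, Matrix.mul_assoc, ← Matrix.mul_assoc Q, hQ, Matrix.one_mul]

lemma re_trace_mul_conjTranspose_self {m n : Type*} [Fintype m] [Fintype n]
    (B : Matrix m n ℂ) : (trace (B * Bᴴ)).re = ∑ i, ∑ j, Complex.normSq (B i j) := by
  simp [trace, mul_apply, Complex.mul_conj]

lemma exists_bound_inv_sq_mul_of_isBigO_sq {f : ℝ → ℝ} (hf : f =O[𝓝 0] fun x => x ^ 2) :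
    ∃ B, ∀ᶠ x in 𝓝 0, |(x ^ 2)⁻¹ * f x| ≤ B := by
  obtain ⟨c, hc, hf⟩ := hf.exists_nonneg
  refine ⟨c, hf.bound.mono fun x hx => ?_⟩
  rw [Real.norm_eq_abs, Real.norm_eq_abs, abs_of_nonneg (sq_nonneg x)] at hx
  rw [abs_mul, abs_inv, abs_of_nonneg (sq_nonneg x)]
  calc (x ^ 2)⁻¹ * |f x| ≤ (x ^ 2)⁻¹ * (c * x ^ 2) := by gcongr
    _ ≤ c := by
      rw [mul_left_comm]
      exact mul_le_of_le_one_right hc (inv_mul_le_one_of_le₀ le_rfl (sq_nonneg x))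

lemma sum_normSq_row_eq_of_lowerTriangular {M : ℕ} {L : Matrix (Fin M) (Fin M) ℂ}
    (hLtri : ∀ i j : Fin M, i < j → L i j = 0) {i : Fin M} (hi : L i i ≠ 0) :
    ∑ j, Complex.normSq (L i j) = (1 + eta M L i) * Complex.normSq (L i i) := by
  have hdiag : ∑ j ∈ univ.filter (fun j => ¬ j < i), Complex.normSq (L i j) =
      Complex.normSq (L i i) := by
    refine sum_eq_single_of_mem i (by simp) fun j hj hji => ?_
    rw [hLtri i j (lt_of_le_of_ne (by simpa using hj) (Ne.symm hji)), map_zero]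
  have hoff : eta M L i * Complex.normSq (L i i) =
      ∑ j ∈ univ.filter (fun j => j < i), Complex.normSq (L i j) := by
    rw [eta, sum_mul]
    exact sum_congr rfl fun j _ => div_mul_cancel₀ _ (Complex.normSq_pos.2 hi).ne'
  rw [← sum_filter_add_sum_filter_not univ (fun j => j < i), hdiag, ← hoff]
  ring

lemma re_trace_channel_mul_conjTranspose_self {M m : ℕ} {lam : Fin M → ℝ}
    (hlam : ∀ i, 0 ≤ lam i) {L : Matrix (Fin M) (Fin M) ℂ}
    (hLtri : ∀ i j : Fin M, i < j → L i j = 0)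
    (hLdiag : ∀ i : Fin M, L i i ≠ 0) {Q : Matrix (Fin M) (Fin m) ℂ} (hQ : Q * Qᴴ = 1) :
    (trace ((diagonal (fun i => (Real.sqrt (lam i) : ℂ)) * L * Q) *
        (diagonal (fun i => (Real.sqrt (lam i) : ℂ)) * L * Q)ᴴ)).re =
      ∑ i, (1 + eta M L i) * lam i * Complex.normSq (L i i) := by
  rw [mul_conjTranspose_self_mul_of_mul_conjTranspose_eq_one _ hQ,
    re_trace_mul_conjTranspose_self]
  refine sum_congr rfl fun i _ => ?_
  simp only [diagonal_mul, Complex.normSq_mul, Complex.normSq_ofReal,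
    Real.mul_self_sqrt (hlam i), ← mul_sum, sum_normSq_row_eq_of_lowerTriangular hLtri (hLdiag i)]
  ring

theorem benchRate_sub_rateDPC_isBigO_sq {M m : ℕ} {lam : Fin M → ℝ}
    (hlam : ∀ i, 0 ≤ lam i) {L : Matrix (Fin M) (Fin M) ℂ}
    (hLtri : ∀ i j : Fin M, i < j → L i j = 0)
    (hLdiag : ∀ i : Fin M, L i i ≠ 0) {Q : Matrix (Fin M) (Fin m) ℂ} (hQ : Q * Qᴴ = 1) :
    (fun ρ => benchRate M m lam L Q ρ - rateDPC M lam L ρ -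
      ρ / Real.log 2 * ∑ i, eta M L i * lam i * Complex.normSq (L i i)) =O[𝓝 0]
      fun ρ => ρ ^ 2 := by
  have hC := log_sub_mul_isBigO_sq (re_det_one_add_smul_sub_isBigO_sq
    ((diagonal (fun i => (Real.sqrt (lam i) : ℂ)) * L * Q) *
      (diagonal (fun i => (Real.sqrt (lam i) : ℂ)) * L * Q)ᴴ))
  have hR := IsBigO.fun_sum (s := univ) fun i _ =>
    log_sub_mul_isBigO_sq (f := fun ρ => 1 + ρ * lam i * Complex.normSq (L i i))
      (c := lam i * Complex.normSq (L i i)) ((isBigO_zero _ _).congr_left fun ρ => by ring)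
  refine ((hC.sub hR).const_mul_left (Real.log 2)⁻¹).congr_left fun ρ => ?_
  rw [re_trace_channel_mul_conjTranspose_self hlam hLtri hLdiag hQ]
  simp only [benchRate, rateDPC, Real.logb, ← sum_div, sum_sub_distrib, ← sum_mul, add_mul,
    sum_add_distrib, one_mul]
  ring

theorem lowSNR_gap_ZFDPC_general
    (M m : ℕ)
    (lam : Fin M → ℝ) (hlam : ∀ i, 0 < lam i)
    (L : Matrix (Fin M) (Fin M) ℂ)
    (hLtri : ∀ i j : Fin M, i < j → L i j = 0)
    (hLdiag : ∀ i : Fin M, L i i ≠ 0)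
    (Q : Matrix (Fin M) (Fin m) ℂ) (hQ : Q * Qᴴ = 1) :
    ∃ B : ℝ, ∀ᶠ ρ : ℝ in nhdsWithin (0 : ℝ) (Set.Ioi 0),
      |(ρ ^ 2)⁻¹ * (benchRate M m lam L Q ρ - rateDPC M lam L ρ -
        (ρ / Real.log 2) *
          ∑ i, eta M L i * lam i * Complex.normSq (L i i))| ≤ B := by
  obtain ⟨B, hB⟩ := exists_bound_inv_sq_mul_of_isBigO_sq
    (benchRate_sub_rateDPC_isBigO_sq (fun i => (hlam i).le) hLtri hLdiag hQ)
  exact ⟨B, hB.filter_mono nhdsWithin_le_nhds⟩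

/-- Low-SNR gap for ZFDPC-SUS:
`C(ρ) − R_DPC(ρ) = (ρ/ln 2) Σ_i η_i λ_i |l_{i,i}|² + O(ρ²)` as `ρ → 0⁺`. -/
theorem lowSNR_gap_ZFDPC
    (M m : ℕ) (hM : 1 ≤ M) (hm : M ≤ m)
    (lam : Fin M → ℝ) (hlam : ∀ i, 0 < lam i)
    (L : Matrix (Fin M) (Fin M) ℂ)
    (hLtri : ∀ i j : Fin M, i < j → L i j = 0)
    (hLdiag : ∀ i : Fin M, L i i ≠ 0)
    (Q : Matrix (Fin M) (Fin m) ℂ) (hQ : Q * Qᴴ = 1) :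
    ∃ B : ℝ, ∀ᶠ ρ : ℝ in nhdsWithin (0 : ℝ) (Set.Ioi 0),
      |(ρ ^ 2)⁻¹ * (benchRate M m lam L Q ρ - rateDPC M lam L ρ -
        (ρ / Real.log 2) *
          ∑ i, eta M L i * lam i * Complex.normSq (L i i))| ≤ B :=
  lowSNR_gap_ZFDPC_general M m lam hlam L hLtri hLdiag Q hQ
end

section
/- Suppose 0 < δ < 1/(M−1). For all integers n, k with 2 ≤ n ≤ M−1 and 1 ≤ k ≤ n−1, φ_n(1) = [ ∏_{j=0}^{k-1} (M − n + j) ]^{-1} · Σ_{i=0}^{k} (−1)^i C(k, i) φ_{n-k}(1 − i δ), where C(k,i) denotes the binomial coefficient. -/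
open MeasureTheory Finset

/-- `φ_n(z) = ∫_{[0,δ]^n} (z − t_1 − ⋯ − t_n)^{M−n−1} dt`, with `φ_0(z) = z^{M−1}`. -/
noncomputable def phi (M : ℕ) (δ : ℝ) : ℕ → ℝ → ℝ
  | 0, z => z ^ (M - 1)
  | (n + 1), z =>
      ∫ t in {t : Fin (n + 1) → ℝ | ∀ i, t i ∈ Set.Icc (0 : ℝ) δ},
        (z - ∑ i, t i) ^ (M - (n + 1) - 1) ∂volume

/-!
Integrating out the first coordinate of the cube (Fubini) gives the recurrence
`φ_{m+1}(z) = (φ_m(z) − φ_m(z − δ)) / (M − m − 1)`, so `φ_{m+1}` is a constant multiple of the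
backward difference of `φ_m`. Iterating this `k` times and expanding the `k`-th backward
difference binomially gives the formula.
-/

theorem setIntegral_univ_pi_fin_succ {α E : Type*} [MeasurableSpace α] [NormedAddCommGroup E]
    [NormedSpace ℝ E] (μ : Measure α) [SigmaFinite μ] {n : ℕ} (s : Set α)
    (f : (Fin (n + 1) → α) → E)
    (hf : IntegrableOn f (Set.univ.pi fun _ ↦ s) (Measure.pi fun _ ↦ μ)) :
    ∫ t in Set.univ.pi (fun _ ↦ s), f t ∂Measure.pi (fun _ ↦ μ) =
      ∫ y in Set.univ.pi (fun _ ↦ s), ∫ x in s, f (Fin.cons x y) ∂μ ∂Measure.pi (fun _ ↦ μ) := by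
  simp only [IntegrableOn, Measure.restrict_pi_pi] at hf ⊢
  have e := measurePreserving_piFinSuccAbove (fun _ : Fin (n + 1) ↦ μ.restrict s) 0
  rw [← e.symm.integral_comp', integral_prod_symm]
  · simp [MeasurableEquiv.piFinSuccAbove_symm_apply, Fin.insertNthEquiv, Fin.insertNth_zero']
  · exact (e.symm.integrable_comp_emb (MeasurableEquiv.measurableEmbedding _)).mpr hf

theorem integral_Icc_sub_pow (p : ℕ) (w : ℝ) {δ : ℝ} (hδ : 0 ≤ δ) :
    ∫ x in Set.Icc 0 δ, (w - x) ^ p = (w ^ (p + 1) - (w - δ) ^ (p + 1)) / (p + 1) := by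
  rw [integral_Icc_eq_integral_Ioc, ← intervalIntegral.integral_of_le hδ,
    intervalIntegral.integral_comp_sub_left (· ^ p) w, integral_pow, sub_zero]

theorem neg_one_pow_smul_fwdDiff_neg_iter_eq_sum {M G : Type*} [AddCommGroup M] [AddCommGroup G]
    (h : M) (f : M → G) (k : ℕ) (y : M) :
    (-1 : ℤ) ^ k • (fwdDiff (-h))^[k] f y =
      ∑ i ∈ range (k + 1), ((-1 : ℤ) ^ i * k.choose i) • f (y - i • h) := by
  rw [fwdDiff_iter_eq_sum_shift, Finset.smul_sum]
  refine Finset.sum_congr rfl fun i hi ↦ ?_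
  have hik : i ≤ k := Nat.lt_succ_iff.mp (Finset.mem_range.mp hi)
  have hsign : (-1 : ℤ) ^ k * (-1) ^ (k - i) = (-1) ^ i := by
    rw [← pow_add, show k + (k - i) = i + 2 * (k - i) by omega, pow_add, pow_mul]
    simp
  rw [smul_smul, ← mul_assoc, hsign, smul_neg, sub_eq_add_neg]

theorem eq_prod_mul_sum_of_succ_eq_mul_sub {M R : Type*} [AddCommGroup M] [CommRing R]
    {g : ℕ → M → R} {a : ℕ → R} {h : M} {m k : ℕ}
    (hg : ∀ j < k, ∀ y, g (m + j + 1) y = a (m + j) * (g (m + j) y - g (m + j) (y - h)))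
    (y : M) :
    g (m + k) y = (∏ j ∈ range k, a (m + j)) *
      ∑ i ∈ range (k + 1), (-1) ^ i * (k.choose i : R) * g m (y - i • h) := by
  -- `g z - g (z - h) = -(fwdDiff (-h) g) z`, whence the sign `(-1) ^ k`
  suffices g (m + k) = (∏ j ∈ range k, a (m + j)) • (-1 : ℤ) ^ k • (fwdDiff (-h))^[k] (g m) by
    rw [this, Pi.smul_apply, Pi.smul_apply, neg_one_pow_smul_fwdDiff_neg_iter_eq_sum, smul_eq_mul]
    simp [Finset.mul_sum, zsmul_eq_mul]
  induction k with
  | zero => simp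
  | succ k ih =>
    funext y
    rw [← add_assoc, hg k k.lt_succ_self y, ih fun j hj ↦ hg j (Nat.lt_succ_of_lt hj)]
    simp only [Function.iterate_succ_apply', Pi.smul_apply]
    unfold fwdDiff
    simp only [prod_range_succ, pow_succ, smul_eq_mul, zsmul_eq_mul, sub_eq_add_neg]
    push_cast
    ring

theorem phi_eq_setIntegral (M : ℕ) (δ : ℝ) (n : ℕ) (z : ℝ) :
    phi M δ n z =
      ∫ t : Fin n → ℝ in Set.univ.pi (fun _ ↦ Set.Icc 0 δ), (z - ∑ i, t i) ^ (M - n - 1) := by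
  cases n with
  | zero =>
    simp [phi, volume_pi, Measure.pi_of_empty (fun _ : Fin 0 ↦ (volume : Measure ℝ)),
      Set.univ_eq_empty_iff.mpr]
  | succ n =>
    simp only [phi]
    congr
    ext
    simp

theorem phi_succ {M m : ℕ} (hm : m + 2 ≤ M) {δ : ℝ} (hδ : 0 ≤ δ) (z : ℝ) :
    phi M δ (m + 1) z = ((M : ℝ) - (m + 1))⁻¹ * (phi M δ m z - phi M δ m (z - δ)) := by
  have hint : ∀ w : ℝ, ∀ p : ℕ, ∀ {n : ℕ}, IntegrableOn (fun t : Fin n → ℝ ↦ (w - ∑ i, t i) ^ p)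
      (Set.univ.pi fun _ ↦ Set.Icc 0 δ) := fun w p ↦
    (by fun_prop : Continuous _).continuousOn.integrableOn_compact
      (isCompact_univ_pi fun _ ↦ isCompact_Icc)
  have hexp : M - (m + 1) - 1 + 1 = M - m - 1 := by omega
  have hcast : ((M - (m + 1) - 1 : ℕ) : ℝ) + 1 = M - (m + 1) := by
    rw [Nat.cast_sub (by omega), Nat.cast_sub (by omega)]
    push_cast
    ring
  have inner (y : Fin m → ℝ) :
      ∫ x in Set.Icc 0 δ, (z - ∑ i, (Fin.cons x y : Fin (m + 1) → ℝ) i) ^ (M - (m + 1) - 1) =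
        ((z - ∑ i, y i) ^ (M - m - 1) - (z - δ - ∑ i, y i) ^ (M - m - 1)) / (M - (m + 1)) := by
    have hsum (x : ℝ) : z - ∑ i, (Fin.cons x y : Fin (m + 1) → ℝ) i = z - ∑ i, y i - x := by
      rw [Fin.sum_cons]
      ring
    simp_rw [hsum]
    rw [integral_Icc_sub_pow _ _ hδ, hexp, hcast, sub_right_comm z]
  rw [phi_eq_setIntegral, phi_eq_setIntegral, phi_eq_setIntegral, volume_pi,
    setIntegral_univ_pi_fin_succ _ _ _ (hint _ _), ← volume_pi]
  simp_rw [inner]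
  rw [integral_div, integral_sub (hint _ _) (hint _ _), div_eq_inv_mul]

theorem phi_induction_general (M : ℕ) (δ : ℝ) (hδ0 : 0 < δ)
    (n k : ℕ) (hnM : n ≤ M - 1) (hkn : k ≤ n - 1) :
    phi M δ n 1 = (∏ j ∈ Finset.range k, ((M : ℝ) - n + j))⁻¹ *
      ∑ i ∈ Finset.range (k + 1), (-1) ^ i * (k.choose i : ℝ) * phi M δ (n - k) (1 - i * δ) := by
  obtain ⟨m, rfl⟩ : ∃ m, n = m + k := ⟨n - k, by omega⟩
  have hrec : ∀ j < k, ∀ z, phi M δ (m + j + 1) z =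
      ((M : ℝ) - ((m + j : ℕ) + 1))⁻¹ * (phi M δ (m + j) z - phi M δ (m + j) (z - δ)) :=
    fun j hj z ↦ phi_succ (by omega) hδ0.le z
  have hprod : ∏ j ∈ range k, ((M : ℝ) - ((m + j : ℕ) + 1))⁻¹ =
      (∏ j ∈ range k, ((M : ℝ) - (m + k : ℕ) + j))⁻¹ := by
    rw [← prod_inv_distrib, ← prod_range_reflect]
    refine prod_congr rfl fun j hj ↦ ?_
    have hjk := mem_range.mp hj
    push_cast [Nat.sub_sub, Nat.cast_sub (show 1 + j ≤ k by omega)]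
    ring
  rw [eq_prod_mul_sum_of_succ_eq_mul_sub (a := fun l : ℕ ↦ ((M : ℝ) - (l + 1))⁻¹) hrec, hprod,
    Nat.add_sub_cancel]
  simp [nsmul_eq_mul]

/-- The induction formula
`φ_n(1) = [∏_{j=0}^{k−1}(M−n+j)]⁻¹ Σ_{i=0}^{k} (−1)^i C(k,i) φ_{n−k}(1 − iδ)`. -/
theorem phi_induction (M : ℕ) (hM : 2 ≤ M) (δ : ℝ) (hδ0 : 0 < δ)
    (hδ1 : δ < 1 / ((M : ℝ) - 1))
    (n k : ℕ) (hn2 : 2 ≤ n) (hnM : n ≤ M - 1) (hk1 : 1 ≤ k) (hkn : k ≤ n - 1) :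
    phi M δ n 1 = (∏ j ∈ Finset.range k, ((M : ℝ) - n + j))⁻¹ *
      ∑ i ∈ Finset.range (k + 1), (-1) ^ i * (k.choose i : ℝ) * phi M δ (n - k) (1 - i * δ) :=
  phi_induction_general M δ hδ0 n k hnM hkn
end

section
/- Suppose 0 < δ < 1/(M−1). For every integer n with 1 ≤ n ≤ M−1, φ_n(1) = ((M−n−1)!/(M−1)!) · Σ_{k=n}^{M-1} C(M−1, k) (−1)^k [ Σ_{i=0}^{n} C(n, i) (−1)^i i^k ] δ^k, where C(a,b) denotes the binomial coefficient. -/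
open MeasureTheory Finset

/-! Integrating out one coordinate, `∫₀^δ (z - s - iδ)^p ds` is a first difference of
`u ↦ (z - uδ)^(p+1) / (p+1)`, so by Pascal's rule the `n`-fold integral of `(z - Σ tᵢ)^m` over
the cube is `m!/(m+n)!` times the alternating binomial sum `Σᵢ (-1)^i C(n,i) (z - iδ)^(m+n)`.
At `z = 1`, expand `(1 - iδ)^(M-1)`: the coefficient of `δ^k` is an `n`-th finite difference of
`i ↦ i^k`, which vanishes for `k < n`. -/

open scoped Nat

section FiniteDifferences

variable {α R : Type*} [AddCommMonoid α] [CommRing R]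

theorem sum_range_neg_one_pow_mul_choose_mul (f : α → R) (h y : α) (n : ℕ) :
    ∑ i ∈ range (n + 1), (-1) ^ i * (n.choose i : R) * f (y + i • h)
      = (-1) ^ n * (fwdDiff h)^[n] f y := by
  rw [fwdDiff_iter_eq_sum_shift, mul_sum]
  refine sum_congr rfl fun i hi ↦ ?_
  obtain ⟨j, rfl⟩ := Nat.exists_eq_add_of_le (Nat.le_of_lt_succ (mem_range.mp hi))
  rw [zsmul_eq_mul, Nat.add_sub_cancel_left, pow_add]
  push_cast
  have hsq : ((-1 : R) ^ j) * (-1) ^ j = 1 := by rw [← pow_add, Even.neg_one_pow ⟨j, rfl⟩]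
  linear_combination -((-1) ^ i * ((i + j).choose i : R) * f (y + i • h)) * hsq

theorem sum_range_neg_one_pow_mul_choose_mul_pow_eq_zero {n k : ℕ} (hk : k < n) :
    ∑ i ∈ range (n + 1), (-1) ^ i * (n.choose i : R) * (i : R) ^ k = 0 := by
  simpa [fwdDiff_iter_pow_eq_zero_of_lt hk] using
    sum_range_neg_one_pow_mul_choose_mul (fun r : R ↦ r ^ k) 1 0 n

theorem sum_range_neg_one_pow_mul_choose_succ_mul (f : ℕ → R) (n : ℕ) :
    ∑ i ∈ range (n + 2), (-1) ^ i * ((n + 1).choose i : R) * f i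
      = ∑ i ∈ range (n + 1), (-1) ^ i * (n.choose i : R) * (f i - f (i + 1)) := by
  have hf := sum_range_neg_one_pow_mul_choose_mul f 1 0 (n + 1)
  have hΔf := sum_range_neg_one_pow_mul_choose_mul (fwdDiff 1 f) 1 0 n
  simp only [zero_add, smul_eq_mul, mul_one] at hf hΔf
  rw [hf, Function.iterate_succ_apply, pow_succ, mul_comm _ (-1), mul_assoc, ← hΔf, mul_sum]
  refine sum_congr rfl fun i _ ↦ ?_
  simp only [fwdDiff]
  ring

theorem sum_range_neg_one_pow_mul_choose_mul_one_sub_mul_pow (n p : ℕ) (δ : R) :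
    ∑ i ∈ range (n + 1), (-1) ^ i * (n.choose i : R) * (1 - i * δ) ^ p
      = ∑ k ∈ Icc n p, (p.choose k : R) * (-1) ^ k *
          (∑ i ∈ range (n + 1), (n.choose i : R) * (-1) ^ i * (i : R) ^ k) * δ ^ k := by
  calc _ = ∑ i ∈ range (n + 1), ∑ k ∈ range (p + 1),
          (p.choose k : R) * (-1) ^ k * ((n.choose i : R) * (-1) ^ i * (i : R) ^ k) * δ ^ k := by
        refine sum_congr rfl fun i _ ↦ ?_
        rw [sub_eq_neg_add, add_pow, mul_sum]
        refine sum_congr rfl fun k _ ↦ ?_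
        ring
    _ = ∑ k ∈ range (p + 1), (p.choose k : R) * (-1) ^ k *
          (∑ i ∈ range (n + 1), (n.choose i : R) * (-1) ^ i * (i : R) ^ k) * δ ^ k := by
        rw [sum_comm]
        simp_rw [mul_sum, sum_mul]
    _ = _ := by
        refine (sum_subset (fun k hk ↦ ?_) fun k _ hk ↦ ?_).symm
        · simp only [mem_Icc, mem_range] at hk ⊢
          omega
        · have hkn : k < n := by simp_all
          simp_rw [mul_comm (n.choose _ : R), sum_range_neg_one_pow_mul_choose_mul_pow_eq_zero hkn,
            mul_zero, zero_mul]

end FiniteDifferences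

theorem integral_comp_sum_fin_succ {α E : Type*} [AddCommMonoid α] [MeasurableSpace α]
    [NormedAddCommGroup E] [NormedSpace ℝ E] {μ : Measure α} [SigmaFinite μ] {n : ℕ}
    {f : α → E} (hf : Integrable (fun t : Fin (n + 1) → α ↦ f (∑ i, t i)) (Measure.pi fun _ ↦ μ)) :
    ∫ t, f (∑ i, t i) ∂(Measure.pi fun _ : Fin (n + 1) ↦ μ)
      = ∫ s, ∫ t, f (s + ∑ i, t i) ∂(Measure.pi fun _ : Fin n ↦ μ) ∂μ := by
  have e := (measurePreserving_piFinSuccAbove (fun _ : Fin (n + 1) ↦ μ) 0).symm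
  rw [← e.integrable_comp_emb (MeasurableEquiv.measurableEmbedding _)] at hf
  rw [← e.integral_comp']
  refine (integral_prod _ hf).trans ?_
  simp [Fin.insertNthEquiv, Fin.sum_univ_succ]

theorem Continuous.integrable_pi_restrict_Icc {ι E : Type*} [Fintype ι] [NormedAddCommGroup E]
    {g : (ι → ℝ) → E} (hg : Continuous g) (a b : ℝ) :
    Integrable g (Measure.pi fun _ ↦ volume.restrict (Set.Icc a b)) := by
  rw [← Measure.restrict_pi_pi, ← volume_pi]
  exact hg.continuousOn.integrableOn_compact (isCompact_univ_pi fun _ ↦ isCompact_Icc)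

theorem intervalIntegral.integral_sub_pow (a δ : ℝ) (p : ℕ) :
    ∫ s in (0)..δ, (a - s) ^ p = (a ^ (p + 1) - (a - δ) ^ (p + 1)) / (p + 1) := by
  simp [intervalIntegral.integral_comp_sub_left (fun x ↦ x ^ p)]

theorem integral_pi_Icc_sub_sum_pow {δ : ℝ} (hδ : 0 ≤ δ) (m n : ℕ) (z : ℝ) :
    ∫ t, (z - ∑ i, t i) ^ m ∂(Measure.pi fun _ : Fin n ↦ volume.restrict (Set.Icc 0 δ))
      = (m ! / (m + n)! : ℝ) *
          ∑ i ∈ range (n + 1), (-1) ^ i * (n.choose i : ℝ) * (z - i * δ) ^ (m + n) := by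
  induction n generalizing z with
  | zero =>
    have hm : (m ! : ℝ) ≠ 0 := by positivity
    simp [measureReal_def, hm]
  | succ n ih =>
    rw [integral_comp_sum_fin_succ (f := fun u ↦ (z - u) ^ m)
      ((by fun_prop : Continuous _).integrable_pi_restrict_Icc 0 δ)]
    simp_rw [← sub_sub, ih]
    rw [integral_Icc_eq_integral_Ioc, ← intervalIntegral.integral_of_le hδ,
      intervalIntegral.integral_const_mul, intervalIntegral.integral_finsetSum
        fun i _ ↦ by apply Continuous.intervalIntegrable; fun_prop]
    have hterm (i : ℕ) : ∫ s in (0)..δ, (-1) ^ i * (n.choose i : ℝ) * (z - s - i * δ) ^ (m + n)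
        = (-1) ^ i * (n.choose i : ℝ) *
            ((z - i * δ) ^ (m + n + 1) - (z - (i + 1 : ℕ) * δ) ^ (m + n + 1)) / (m + n + 1) := by
      simp_rw [intervalIntegral.integral_const_mul, sub_right_comm z _ (i * δ),
        intervalIntegral.integral_sub_pow]
      push_cast
      ring
    simp_rw [hterm, ← add_assoc, ← sum_div,
      sum_range_neg_one_pow_mul_choose_succ_mul (fun i : ℕ ↦ (z - i * δ) ^ (m + n + 1)),
      Nat.factorial_succ]
    generalize (∑ i ∈ range (n + 1), _ : ℝ) = S
    push_cast
    field_simp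

theorem phi_eq_integral_pi (M : ℕ) (δ : ℝ) (n : ℕ) (z : ℝ) :
    phi M δ n z = ∫ t, (z - ∑ i, t i) ^ (M - n - 1)
      ∂(Measure.pi fun _ : Fin n ↦ volume.restrict (Set.Icc 0 δ)) := by
  cases n with
  | zero => simp [phi, measureReal_def]
  | succ n =>
    have hcube : {t : Fin (n + 1) → ℝ | ∀ i, t i ∈ Set.Icc 0 δ}
        = Set.univ.pi fun _ ↦ Set.Icc 0 δ := by
      ext
      simp only [Set.mem_ofPred_eq, Set.mem_univ_pi]
    rw [phi, hcube, volume_pi, Measure.restrict_pi_pi]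

theorem phi_closed_form_general (M : ℕ) (δ : ℝ) (hδ0 : 0 < δ)
    (n : ℕ) (hnM : n ≤ M - 1) :
    phi M δ n 1 = ((Nat.factorial (M - n - 1) : ℝ) / (Nat.factorial (M - 1) : ℝ)) *
      ∑ k ∈ Finset.Icc n (M - 1), ((M - 1).choose k : ℝ) * (-1) ^ k *
        (∑ i ∈ Finset.range (n + 1), (n.choose i : ℝ) * (-1) ^ i * (i : ℝ) ^ k) * δ ^ k := by
  rw [phi_eq_integral_pi, integral_pi_Icc_sub_sum_pow hδ0.le, show M - n - 1 + n = M - 1 by omega,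
    sum_range_neg_one_pow_mul_choose_mul_one_sub_mul_pow]

/-- Closed form:
`φ_n(1) = ((M−n−1)!/(M−1)!) Σ_{k=n}^{M−1} C(M−1,k)(−1)^k [Σ_{i=0}^{n} C(n,i)(−1)^i i^k] δ^k`. -/
theorem phi_closed_form (M : ℕ) (hM : 2 ≤ M) (δ : ℝ) (hδ0 : 0 < δ)
    (hδ1 : δ < 1 / ((M : ℝ) - 1))
    (n : ℕ) (hn1 : 1 ≤ n) (hnM : n ≤ M - 1) :
    phi M δ n 1 = ((Nat.factorial (M - n - 1) : ℝ) / (Nat.factorial (M - 1) : ℝ)) *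
      ∑ k ∈ Finset.Icc n (M - 1), ((M - 1).choose k : ℝ) * (-1) ^ k *
        (∑ i ∈ Finset.range (n + 1), (n.choose i : ℝ) * (-1) ^ i * (i : ℝ) ^ k) * δ ^ k :=
  phi_closed_form_general M δ hδ0 n hnM
end
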